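/- arXiv:2306.11292 — 2 statements merged into one kernel-verified Lean document; each statement's English description precedes it below -/
import Mathlib

section
/- Let a, b, c be integers with c ≥ 0, a ∣ c, and b ∣ c. If the 2×2 real symmetric matrix M = [[a, c], [c, b]] is negative definite (equivalently, -M is positive definite), then c = 0. -/
theorem stmt_1 (a b c : ℤ) (hc : 0 ≤ c) (hac : a ∣ c) (hbc : b ∣ c)
    (hneg : (-(!![(a : ℝ), (c : ℝ); (c : ℝ), (b : ℝ)])).PosDef) : c = 0 := by
  have hdet := hneg.det_pos
  have ha := hneg.dotProduct_mulVec_pos (x := ![1, 0]) (by intro h; simpa using congrFun h 0)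
  have hb := hneg.dotProduct_mulVec_pos (x := ![0, 1]) (by intro h; simpa using congrFun h 1)
  simp [Matrix.det_fin_two, dotProduct, Matrix.mulVec, Fin.sum_univ_two] at hdet ha hb
  have hdet' : (c : ℝ) * c < a * b := by nlinarith
  have hdZ : c * c < a * b := by exact_mod_cast hdet'
  have haZ : a < 0 := by exact_mod_cast ha
  have hbZ : b < 0 := by exact_mod_cast hb
  by_contra h
  have hcpos : 0 < c := lt_of_le_of_ne hc (Ne.symm h)
  have h1 : -a ≤ c := Int.le_of_dvd hcpos (hac.neg_left)
  have h2 : -b ≤ c := Int.le_of_dvd hcpos (hbc.neg_left)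
  nlinarith
end

section
/- Let a, b, c be integers with a < 0, b < 0, c ≥ 0, a ∣ c, b ∣ c, and a*b - c^2 ≥ 0. Then either c = 0, or both c = -a and c = -b (in which case a*b - c^2 = 0). -/
/-! A nonzero multiple `c` of `a` and of `b` has `|a| ≤ |c|` and `|b| ≤ |c|`, so
`c ^ 2 ≥ |a| * |b| = a * b`; together with `a * b ≥ c ^ 2` this forces `|a| = |b| = |c|`. -/

theorem eq_and_eq_of_sq_le_mul {R : Type*} [CommRing R] [LinearOrder R] [IsStrictOrderedRing R]
    {x y z : R} (hx : 0 < x) (hy : 0 < y) (hxz : x ≤ z) (hyz : y ≤ z) (h : z ^ 2 ≤ x * y) :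
    x = z ∧ y = z := by
  have hxy : x * y ≤ x * z := mul_le_mul_of_nonneg_left hyz hx.le
  have hxz' : x * z ≤ z * z := mul_le_mul_of_nonneg_right hxz (hy.le.trans hyz)
  constructor <;> nlinarith

theorem stmt_3 (a b c : ℤ) (ha : a < 0) (hb : b < 0) (hc : 0 ≤ c)
    (hac : a ∣ c) (hbc : b ∣ c) (hdet : a * b - c ^ 2 ≥ 0) :
    c = 0 ∨ (c = -a ∧ c = -b ∧ a * b - c ^ 2 = 0) := by
  rcases hc.eq_or_lt with hc0 | hc_pos
  · exact Or.inl hc0.symm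
  obtain ⟨ha_eq, hb_eq⟩ := eq_and_eq_of_sq_le_mul (neg_pos.2 ha) (neg_pos.2 hb)
    (Int.le_of_dvd hc_pos (neg_dvd.2 hac)) (Int.le_of_dvd hc_pos (neg_dvd.2 hbc))
    (by rw [neg_mul_neg]; linarith)
  exact Or.inr ⟨ha_eq.symm, hb_eq.symm, by linear_combination (-b) * ha_eq + c * hb_eq⟩
end
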